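/- Let S be a simple Cu-semigroup with largest element ∞. If S has property (QQ) (every element with a properly infinite multiple is itself properly infinite), then S has cancellation of small elements at infinity: whenever x ≪ ∞, y ≠ 0, and x + y = ∞, then y = ∞. -/

import Mathlib

open scoped ENNReal

/-- Compact containment (way-below) relation: `a ≪ b` iff for every monotone sequence
with a supremum dominating `b`, some term dominates `a`. -/
def CuWayBelow {S : Type*} [Preorder S] (a b : S) : Prop :=
  ∀ c : ℕ → S, Monotone c → ∀ s : S, IsLUB (Set.range c) s → b ≤ s → ∃ n, a ≤ c n

/-- The axioms (O1)-(O4) of the category Cu, together with positivity of the order. -/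
structure CuSemigroup (S : Type*) [AddCommMonoid S] [PartialOrder S] [IsOrderedAddMonoid S] : Prop where
  pos : ∀ x : S, 0 ≤ x
  O1 : ∀ c : ℕ → S, Monotone c → ∃ s : S, IsLUB (Set.range c) s
  O2 : ∀ a : S, ∃ c : ℕ → S, (∀ n, CuWayBelow (c n) (c (n + 1))) ∧ IsLUB (Set.range c) a
  O3 : ∀ a' a b' b : S, CuWayBelow a' a → CuWayBelow b' b → CuWayBelow (a' + b') (a + b)
  O4 : ∀ c d : ℕ → S, Monotone c → Monotone d → ∀ s t : S,
      IsLUB (Set.range c) s → IsLUB (Set.range d) t →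
      IsLUB (Set.range fun n => c n + d n) (s + t)

/-- Simplicity: every nonzero element is full. -/
def CuSimple (S : Type*) [AddCommMonoid S] [PartialOrder S] [IsOrderedAddMonoid S] : Prop :=
  ∀ x y : S, x ≠ 0 → y ≠ 0 → ∀ y' : S, CuWayBelow y' y → ∃ n : ℕ, y' ≤ n • x

/-- A full sequence: increasing and absorbing every compactly contained element. -/
def CuFullSeq {S : Type*} [AddCommMonoid S] [PartialOrder S] [IsOrderedAddMonoid S] (x : ℕ → S) : Prop :=
  Monotone x ∧ ∀ z' z : S, CuWayBelow z' z → ∃ n m : ℕ, z' ≤ m • x n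

/-- The value `β(x,y) = inf { l/k : k ≥ 1, k•x ≤ l•y }`. -/
noncomputable def beta {W : Type*} [AddCommMonoid W] [PartialOrder W] [IsOrderedAddMonoid W] (x y : W) : ℝ :=
  sInf {r : ℝ | ∃ k l : ℕ, 0 < k ∧ k • x ≤ l • y ∧ r = (l : ℝ) / (k : ℝ)}

/-- ω-comparison. -/
def OmegaComparison (S : Type*) [AddCommMonoid S] [PartialOrder S] [IsOrderedAddMonoid S] : Prop :=
  ∀ (x' x : S) (y : ℕ → S), CuWayBelow x' x →
    (∀ j : ℕ, ∃ k : ℕ, 1 ≤ k ∧ (k + 1) • x ≤ k • y j) →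
    ∃ n : ℕ, x' ≤ ∑ j ∈ Finset.range n, y j

/-- β-comparison. -/
def BetaComparison (S : Type*) [AddCommMonoid S] [PartialOrder S] [IsOrderedAddMonoid S] : Prop :=
  ∀ x y : S, (∃ n : ℕ, x ≤ n • y) → beta x y = 0 → x ≤ y

/-!
A small element `x ≪ ∞` is dominated by a multiple `n • y` of any nonzero `y`, so
`x + y = ∞` forces `∞ ≤ (n + 1) • y`. Hence `(n + 1) • y` is properly infinite, and by (QQ)
so is `y`. A nonzero properly infinite element `y` of a simple Cu-semigroup dominates all of
its multiples, hence every `c' ≪ c` with `c ≠ 0`; writing any element as the supremum of a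
`≪`-increasing sequence (O2) shows that `y` is the largest element.
-/

theorem CuWayBelow.le {S : Type*} [Preorder S] {a b : S} (h : CuWayBelow a b) : a ≤ b := by
  have hconst : IsLUB (Set.range fun _ : ℕ => b) b := by
    simpa only [Set.range_const] using isLUB_singleton
  obtain ⟨_, hn⟩ := h (fun _ => b) monotone_const b hconst le_rfl
  exact hn

theorem nsmul_le_self_of_two_nsmul_le {M : Type*} [AddCommMonoid M] [PartialOrder M]
    [IsOrderedAddMonoid M] {y : M} (hy : 0 ≤ y) (h2 : 2 • y ≤ y) (k : ℕ) : k • y ≤ y := by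
  induction k with
  | zero => simpa only [zero_nsmul] using hy
  | succ k ih =>
    calc (k + 1) • y = k • y + y := succ_nsmul y k
      _ ≤ y + y := add_le_add_left ih y
      _ = 2 • y := (two_nsmul y).symm
      _ ≤ y := h2

section Simple

variable {S : Type*} [AddCommMonoid S] [PartialOrder S] [IsOrderedAddMonoid S]

theorem CuSimple.le_of_two_nsmul_le (hCu : CuSemigroup S) (hsimple : CuSimple S) {y : S}
    (hy : y ≠ 0) (h2 : 2 • y ≤ y) (a : S) : a ≤ y := by
  obtain ⟨c, hc, hlub⟩ := hCu.O2 a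
  refine hlub.2 ?_
  rintro _ ⟨m, rfl⟩
  by_cases h0 : c (m + 1) = 0
  · exact ((hc m).le.trans h0.le).trans (hCu.pos y)
  · obtain ⟨k, hk⟩ := hsimple y (c (m + 1)) hy h0 (c m) (hc m)
    exact hk.trans (nsmul_le_self_of_two_nsmul_le (hCu.pos y) h2 k)

theorem CuSimple.exists_le_nsmul_of_add_eq (hsimple : CuSimple S) {infty x y : S}
    (hx : CuWayBelow x infty) (hy : y ≠ 0) (hinfty : infty ≠ 0) (hxy : x + y = infty) :
    ∃ m : ℕ, 1 ≤ m ∧ infty ≤ m • y := by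
  obtain ⟨n, hn⟩ := hsimple y infty hy hinfty x hx
  refine ⟨n + 1, Nat.le_add_left 1 n, ?_⟩
  calc infty = x + y := hxy.symm
    _ ≤ n • y + y := add_le_add_left hn y
    _ = (n + 1) • y := (succ_nsmul y n).symm

end Simple

/-- In a simple Cu-semigroup, property (QQ) implies cancellation of small elements
at infinity. -/
theorem stmt17 {S : Type*} [AddCommMonoid S] [PartialOrder S] [IsOrderedAddMonoid S] (hCu : CuSemigroup S)
    (hsimple : CuSimple S) (infty : S) (htop : ∀ s : S, s ≤ infty)
    (hQQ : ∀ z : S, (∃ m : ℕ, 1 ≤ m ∧ 2 • (m • z) ≤ m • z) → 2 • z ≤ z) :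
    ∀ x y : S, CuWayBelow x infty → y ≠ 0 → x + y = infty → y = infty := by
  intro x y hx hy hxy
  have hinfty : infty ≠ 0 := fun h => hy (le_antisymm (h ▸ htop y) (hCu.pos y))
  obtain ⟨m, hm, hinfty_le⟩ := hsimple.exists_le_nsmul_of_add_eq hx hy hinfty hxy
  have hy_inf : 2 • y ≤ y := hQQ y ⟨m, hm, (htop _).trans hinfty_le⟩
  exact le_antisymm (htop y) (hsimple.le_of_two_nsmul_le hCu hy hy_inf infty)
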